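/- Let R > 0 and h > 0, set ρ(z) = (8h² − π²z²)/(8h² + π²z²) and σ(z) = 4√2 π h z/(8h² + π²z²), and define F : ℝ × ℝ × (0, 2√2 h/π) → ℝ³ by F(x, τ, z) = ( e^{−πτ/h} ρ(z) cos(πx/h), e^{−πτ/h} ρ(z) sin(πx/h), e^{−πτ/h} σ(z) ). Then F is differentiable, its third component is strictly positive, and for every point p = (x, τ, z) in the domain and all vectors u, v ∈ ℝ³ (with coordinates ordered (x, τ, z)): (R² / F₃(p)²) · ⟨DF_p(u), DF_p(v)⟩_{ℝ³} = (R²/z²) [ 2(1−π²z²/(8h²))² u₁v₁ + 2(1+π²z²/(8h²))² u₂v₂ + u₃v₃ ]. That is, the pullback under F of the Euclidean Poincaré-AdS₃ metric (R²/η²)(dξ₁² + dξ₂² + dη²) is the Euclidean thermal AdS₃ metric (R²/z²)[2(1+π²z²/(8h²))² dτ² + 2(1−π²z²/(8h²))² dx² + dz²]. -/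

import Mathlib

/-- The standard Euclidean inner product on `ℝ³ = ℝ × ℝ × ℝ`. -/
def dot3 (a b : ℝ × ℝ × ℝ) : ℝ :=
  a.1 * b.1 + a.2.1 * b.2.1 + a.2.2 * b.2.2

/-- `ρ(z) = (8h² − π²z²)/(8h² + π²z²)`. -/
noncomputable def ρth (h z : ℝ) : ℝ :=
  (8 * h ^ 2 - Real.pi ^ 2 * z ^ 2) / (8 * h ^ 2 + Real.pi ^ 2 * z ^ 2)

/-- `σ(z) = 4√2 π h z/(8h² + π²z²)`. -/
noncomputable def σth (h z : ℝ) : ℝ :=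
  4 * Real.sqrt 2 * Real.pi * h * z / (8 * h ^ 2 + Real.pi ^ 2 * z ^ 2)

/-- The coordinate transformation mapping thermal AdS₃ coordinates `(x, τ, z)` to
Euclidean Poincaré-AdS₃ coordinates (equation (B.6)):
`F(x,τ,z) = (e^{−πτ/h} ρ(z) cos(πx/h), e^{−πτ/h} ρ(z) sin(πx/h), e^{−πτ/h} σ(z))`. -/
noncomputable def thermalToPoincare (h : ℝ) : ℝ × ℝ × ℝ → ℝ × ℝ × ℝ :=
  fun p => (Real.exp (-Real.pi * p.2.1 / h) * ρth h p.2.2 * Real.cos (Real.pi * p.1 / h),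
    Real.exp (-Real.pi * p.2.1 / h) * ρth h p.2.2 * Real.sin (Real.pi * p.1 / h),
    Real.exp (-Real.pi * p.2.1 / h) * σth h p.2.2)

set_option maxHeartbeats 2000000 in
/-- **The pullback of the Euclidean Poincaré-AdS₃ metric under the map (B.6) is
the Euclidean thermal AdS₃ metric.** For every `(x, τ, z)` with
`z ∈ (0, 2√2 h/π)`, `F` is differentiable there, its third component (the Poincaré
bulk coordinate `η`) is positive, and for all tangent vectors `u, v` (coordinates
ordered `(x, τ, z)`): `(R²/F₃²)⟨DF(u), DF(v)⟩ =
(R²/z²)[2(1−π²z²/(8h²))² u₁v₁ + 2(1+π²z²/(8h²))² u₂v₂ + u₃v₃]`. -/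
theorem thermalToPoincare_pullback_metric
    (R h : ℝ) (hR : 0 < R) (hh : 0 < h) (x τ z : ℝ)
    (hz : z ∈ Set.Ioo (0 : ℝ) (2 * Real.sqrt 2 * h / Real.pi)) :
    DifferentiableAt ℝ (thermalToPoincare h) (x, τ, z)
    ∧ 0 < (thermalToPoincare h (x, τ, z)).2.2
    ∧ ∀ u v : ℝ × ℝ × ℝ,
        R ^ 2 / (thermalToPoincare h (x, τ, z)).2.2 ^ 2 *
          dot3 (fderiv ℝ (thermalToPoincare h) (x, τ, z) u)
               (fderiv ℝ (thermalToPoincare h) (x, τ, z) v)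
        = R ^ 2 / z ^ 2 * (2 * (1 - Real.pi ^ 2 * z ^ 2 / (8 * h ^ 2)) ^ 2 * (u.1 * v.1)
            + 2 * (1 + Real.pi ^ 2 * z ^ 2 / (8 * h ^ 2)) ^ 2 * (u.2.1 * v.2.1)
            + u.2.2 * v.2.2) := by
  obtain ⟨hz0, _⟩ := hz
  have hπ := Real.pi_pos
  have hq2 : Real.sqrt 2 ^ 2 = 2 := Real.sq_sqrt (by norm_num)
  have hDpos : 0 < 8 * h ^ 2 + Real.pi ^ 2 * z ^ 2 := by positivity
  have hD : (8 * h ^ 2 + Real.pi ^ 2 * z ^ 2) ≠ 0 := ne_of_gt hDpos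
  have hτd : HasDerivAt (fun t : ℝ => Real.exp (-Real.pi * t / h))
      (Real.exp (-Real.pi * τ / h) * (-Real.pi / h)) τ := by
    have : HasDerivAt (fun t : ℝ => -Real.pi * t / h) (-Real.pi / h) τ := by
      simpa using ((hasDerivAt_id τ).const_mul (-Real.pi)).div_const h
    exact this.exp
  have hcos : HasDerivAt (fun t : ℝ => Real.cos (Real.pi * t / h))
      (-Real.sin (Real.pi * x / h) * (Real.pi / h)) x := by
    have : HasDerivAt (fun t : ℝ => Real.pi * t / h) (Real.pi / h) x := by
      simpa using ((hasDerivAt_id x).const_mul Real.pi).div_const h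
    exact this.cos
  have hsin : HasDerivAt (fun t : ℝ => Real.sin (Real.pi * t / h))
      (Real.cos (Real.pi * x / h) * (Real.pi / h)) x := by
    have : HasDerivAt (fun t : ℝ => Real.pi * t / h) (Real.pi / h) x := by
      simpa using ((hasDerivAt_id x).const_mul Real.pi).div_const h
    exact this.sin
  have hpow : HasDerivAt (fun t : ℝ => t ^ 2) (2 * z) z := by
    simpa using hasDerivAt_pow 2 z
  have hden : HasDerivAt (fun t : ℝ => 8 * h ^ 2 + Real.pi ^ 2 * t ^ 2)
      (Real.pi ^ 2 * (2 * z)) z := (hpow.const_mul (Real.pi ^ 2)).const_add (8 * h ^ 2)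
  have hρd : HasDerivAt (fun t : ℝ => ρth h t)
      ((-(Real.pi ^ 2 * (2 * z)) * (8 * h ^ 2 + Real.pi ^ 2 * z ^ 2)
        - (8 * h ^ 2 - Real.pi ^ 2 * z ^ 2) * (Real.pi ^ 2 * (2 * z)))
        / (8 * h ^ 2 + Real.pi ^ 2 * z ^ 2) ^ 2) z :=
    (((hpow.const_mul (Real.pi ^ 2)).const_sub (8 * h ^ 2)).div hden hD)
  have hσd : HasDerivAt (fun t : ℝ => σth h t)
      ((4 * Real.sqrt 2 * Real.pi * h * (8 * h ^ 2 + Real.pi ^ 2 * z ^ 2)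
        - 4 * Real.sqrt 2 * Real.pi * h * z * (Real.pi ^ 2 * (2 * z)))
        / (8 * h ^ 2 + Real.pi ^ 2 * z ^ 2) ^ 2) z := by
    have hnum2 : HasDerivAt (fun t : ℝ => 4 * Real.sqrt 2 * Real.pi * h * t)
        (4 * Real.sqrt 2 * Real.pi * h) z := by
      simpa using (hasDerivAt_id z).const_mul (4 * Real.sqrt 2 * Real.pi * h)
    exact hnum2.div hden hD
  have P1 : HasFDerivAt (fun p : ℝ × ℝ × ℝ => p.1)
      (ContinuousLinearMap.fst ℝ ℝ (ℝ × ℝ)) (x, τ, z) := hasFDerivAt_fst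
  have P2 : HasFDerivAt (fun p : ℝ × ℝ × ℝ => p.2.1)
      ((ContinuousLinearMap.fst ℝ ℝ ℝ).comp (ContinuousLinearMap.snd ℝ ℝ (ℝ × ℝ))) (x, τ, z) :=
    hasFDerivAt_fst.comp _ hasFDerivAt_snd
  have P3 : HasFDerivAt (fun p : ℝ × ℝ × ℝ => p.2.2)
      ((ContinuousLinearMap.snd ℝ ℝ ℝ).comp (ContinuousLinearMap.snd ℝ ℝ (ℝ × ℝ))) (x, τ, z) :=
    hasFDerivAt_snd.comp _ hasFDerivAt_snd
  have hE := hτd.comp_hasFDerivAt (x, τ, z) P2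
  have hRho := hρd.comp_hasFDerivAt (x, τ, z) P3
  have hSig := hσd.comp_hasFDerivAt (x, τ, z) P3
  have hC := hcos.comp_hasFDerivAt (x, τ, z) P1
  have hS := hsin.comp_hasFDerivAt (x, τ, z) P1
  have hF : HasFDerivAt (thermalToPoincare h) _ (x, τ, z) :=
    HasFDerivAt.prodMk ((hE.mul hRho).mul hC) (HasFDerivAt.prodMk ((hE.mul hRho).mul hS) (hE.mul hSig))
  -- algebraic identities
  have I1 : ρth h z ^ 2 + σth h z ^ 2 = 1 := by
    unfold ρth σth; field_simp; ring_nf; rw [hq2]; ring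
  have I2 : ρth h z * ((-(Real.pi ^ 2 * (2 * z)) * (8 * h ^ 2 + Real.pi ^ 2 * z ^ 2)
        - (8 * h ^ 2 - Real.pi ^ 2 * z ^ 2) * (Real.pi ^ 2 * (2 * z)))
        / (8 * h ^ 2 + Real.pi ^ 2 * z ^ 2) ^ 2)
      + σth h z * ((4 * Real.sqrt 2 * Real.pi * h * (8 * h ^ 2 + Real.pi ^ 2 * z ^ 2)
        - 4 * Real.sqrt 2 * Real.pi * h * z * (Real.pi ^ 2 * (2 * z)))
        / (8 * h ^ 2 + Real.pi ^ 2 * z ^ 2) ^ 2) = 0 := by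
    unfold ρth σth; field_simp; ring_nf; rw [hq2]; ring
  have I3 : ((-(Real.pi ^ 2 * (2 * z)) * (8 * h ^ 2 + Real.pi ^ 2 * z ^ 2)
        - (8 * h ^ 2 - Real.pi ^ 2 * z ^ 2) * (Real.pi ^ 2 * (2 * z)))
        / (8 * h ^ 2 + Real.pi ^ 2 * z ^ 2) ^ 2) ^ 2
      + ((4 * Real.sqrt 2 * Real.pi * h * (8 * h ^ 2 + Real.pi ^ 2 * z ^ 2)
        - 4 * Real.sqrt 2 * Real.pi * h * z * (Real.pi ^ 2 * (2 * z)))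
        / (8 * h ^ 2 + Real.pi ^ 2 * z ^ 2) ^ 2) ^ 2
      = 32 * h ^ 2 * Real.pi ^ 2 / (8 * h ^ 2 + Real.pi ^ 2 * z ^ 2) ^ 2 := by
    field_simp; ring_nf; rw [hq2]; ring
  have I4 : σth h z ^ 2
      = 32 * h ^ 2 * Real.pi ^ 2 * z ^ 2 / (8 * h ^ 2 + Real.pi ^ 2 * z ^ 2) ^ 2 := by
    unfold σth; field_simp; ring_nf; rw [hq2]; ring
  refine ⟨hF.differentiableAt, ?_, ?_⟩
  · simp only [thermalToPoincare, σth]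
    positivity
  intro u v
  have trig : Real.sin (Real.pi * x / h) ^ 2 + Real.cos (Real.pi * x / h) ^ 2 = 1 :=
    Real.sin_sq_add_cos_sq _
  have hdot : dot3 (fderiv ℝ (thermalToPoincare h) (x, τ, z) u)
      (fderiv ℝ (thermalToPoincare h) (x, τ, z) v)
      = Real.exp (-Real.pi * τ / h) ^ 2 *
        ((Real.pi / h) ^ 2 *
            (1 - 32 * h ^ 2 * Real.pi ^ 2 * z ^ 2 / (8 * h ^ 2 + Real.pi ^ 2 * z ^ 2) ^ 2) *
            (u.1 * v.1)
          + (Real.pi / h) ^ 2 * (u.2.1 * v.2.1)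
          + 32 * h ^ 2 * Real.pi ^ 2 / (8 * h ^ 2 + Real.pi ^ 2 * z ^ 2) ^ 2
            * (u.2.2 * v.2.2)) := by
    rw [hF.fderiv]
    simp only [ContinuousLinearMap.add_apply, ContinuousLinearMap.smul_apply,
      ContinuousLinearMap.prod_apply, ContinuousLinearMap.coe_comp', Function.comp_apply,
      ContinuousLinearMap.coe_fst', ContinuousLinearMap.coe_snd', smul_eq_mul, dot3, Pi.mul_apply]
    linear_combination
      (Real.exp (-Real.pi * τ / h) ^ 2 *
        ((Real.pi / h) ^ 2 * ρth h z ^ 2 * (u.1 * v.1 + u.2.1 * v.2.1)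
          + ((-(Real.pi ^ 2 * (2 * z)) * (8 * h ^ 2 + Real.pi ^ 2 * z ^ 2)
            - (8 * h ^ 2 - Real.pi ^ 2 * z ^ 2) * (Real.pi ^ 2 * (2 * z)))
            / (8 * h ^ 2 + Real.pi ^ 2 * z ^ 2) ^ 2) ^ 2 * (u.2.2 * v.2.2)
          - (Real.pi / h) * ρth h z *
            ((-(Real.pi ^ 2 * (2 * z)) * (8 * h ^ 2 + Real.pi ^ 2 * z ^ 2)
            - (8 * h ^ 2 - Real.pi ^ 2 * z ^ 2) * (Real.pi ^ 2 * (2 * z)))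
            / (8 * h ^ 2 + Real.pi ^ 2 * z ^ 2) ^ 2) *
            (u.2.1 * v.2.2 + u.2.2 * v.2.1))) * trig
      + (Real.exp (-Real.pi * τ / h) ^ 2 * (Real.pi / h) ^ 2 *
          (u.1 * v.1 + u.2.1 * v.2.1)) * I1
      + (Real.exp (-Real.pi * τ / h) ^ 2 * (u.2.2 * v.2.2)) * I3
      + (-(Real.exp (-Real.pi * τ / h) ^ 2 * (Real.pi / h) *
          (u.2.1 * v.2.2 + u.2.2 * v.2.1))) * I2
      + (-(Real.exp (-Real.pi * τ / h) ^ 2 * (Real.pi / h) ^ 2 * (u.1 * v.1))) * I4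
  have hF3 : (thermalToPoincare h (x, τ, z)).2.2
      = Real.exp (-Real.pi * τ / h) * σth h z := rfl
  rw [hF3, hdot, mul_pow, I4]
  have he : Real.exp (-Real.pi * τ / h) ≠ 0 := Real.exp_ne_zero _
  have hz' : z ≠ 0 := ne_of_gt hz0
  have hh' : h ≠ 0 := ne_of_gt hh
  field_simp
  ring
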